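/- Let Θ be a threshold function, λ ≥ 0, and P a penalty satisfying condition (constrP) for Θ. Let Y ∈ ℝ^{n×m} and suppose Θ(·;λ) is continuous at every singular value of Y. Then the matrix thresholding B̂ = Θ^σ(Y;λ) is a global minimizer over B ∈ ℝ^{n×m} of F(B) = ‖Y−B‖_F²/2 + Σ_i P(σ_i(B);λ), where σ_i(B) are the singular values of B. -/

import Mathlib

open Matrix

def frobSq {n m : ℕ} (A : Matrix (Fin n) (Fin m) ℝ) : ℝ := ∑ i, ∑ j, A i j ^ 2

/-- `(U, σ, V)` is a (reduced) singular value decomposition of the real `n × m` matrix `B`. -/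
def IsSVD {n m k : ℕ} (B : Matrix (Fin n) (Fin m) ℝ) (U : Matrix (Fin n) (Fin k) ℝ)
    (σ : Fin k → ℝ) (V : Matrix (Fin m) (Fin k) ℝ) : Prop :=
  Uᵀ * U = 1 ∧ Vᵀ * V = 1 ∧ Antitone σ ∧ (∀ i, 0 ≤ σ i) ∧ B = U * diagonal σ * Vᵀ

def IsThresholdFunction (Θ : ℝ → ℝ → ℝ) : Prop :=
  ∀ lam : ℝ, 0 ≤ lam →
    (∀ t : ℝ, Θ (-t) lam = -Θ t lam) ∧
    (Monotone fun t => Θ t lam) ∧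
    Filter.Tendsto (fun t => Θ t lam) Filter.atTop Filter.atTop ∧
    (∀ t : ℝ, 0 ≤ t → 0 ≤ Θ t lam ∧ Θ t lam ≤ t)

/-!
Write `Θ` for `Θ(·; λ)` and `Θ⁻(u) = sup {s | Θ s ≤ u}`. Von Neumann's trace inequality
`tr (Yᵀ B) ≤ ∑ σᵢ(Y) σᵢ(B)` gives `‖Y - B‖²_F ≥ ∑ (σᵢ(Y) - σᵢ(B))²`, with equality at `B̂`, so it
suffices to minimise `(σᵢ - θ)² / 2 + P θ` over `θ ≥ 0` for each `i` separately. By (constrP) this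
function exceeds its value at `θ = Θ σᵢ` by `∫_{Θ σᵢ}^θ (Θ⁻ u - σᵢ) du + q θ ≥ 0`, since
`Θ⁻ - σᵢ` changes sign at `Θ σᵢ`.

The trace inequality follows, for SVDs `Y = U diag σ Vᵀ` and `B = W diag τ Xᵀ`, from
`tr (Yᵀ B) = ∑ σᵢ τⱼ Mᵢⱼ Nᵢⱼ` with `M = Uᵀ W`, `N = Vᵀ X`, the bound `Mᵢⱼ Nᵢⱼ ≤ (Mᵢⱼ² + Nᵢⱼ²) / 2`,
Bessel's inequality (the entrywise squares of `M` and `N` are doubly substochastic), and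
`∑ aᵢ bⱼ Dᵢⱼ ≤ ∑ aᵢ bᵢ` for doubly substochastic `D` and decreasing nonnegative `a`, `b`.
-/

section UpperInverse

open Set Filter MeasureTheory intervalIntegral

noncomputable def upperInverse (f : ℝ → ℝ) (u : ℝ) : ℝ := sSup {s | f s ≤ u}

variable {f : ℝ → ℝ}

theorem bddAbove_setOf_le_of_tendsto_atTop (hf : Tendsto f atTop atTop) (u : ℝ) :
    BddAbove {s | f s ≤ u} := by
  obtain ⟨s₀, hs₀⟩ := (hf.eventually_gt_atTop u).exists_forall_of_atTop
  exact ⟨s₀, fun s hs => not_lt.mp fun h => (hs₀ s h.le).not_ge hs⟩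

theorem le_upperInverse (hf : Tendsto f atTop atTop) {t u : ℝ} (h : f t ≤ u) :
    t ≤ upperInverse f u :=
  le_csSup (bddAbove_setOf_le_of_tendsto_atTop hf u) h

theorem upperInverse_le (hmono : Monotone f) {t u : ℝ} (hu : f 0 ≤ u) (h : u < f t) :
    upperInverse f u ≤ t :=
  csSup_le ⟨0, hu⟩ fun _ hs => le_of_not_gt fun hts => (hmono hts.le).not_gt (h.trans_le' hs)

theorem monotoneOn_upperInverse (hf : Tendsto f atTop atTop) :
    MonotoneOn (upperInverse f) (Ici (f 0)) := fun _ hu _ _ huv =>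
  csSup_le_csSup (bddAbove_setOf_le_of_tendsto_atTop hf _) ⟨0, hu⟩ fun _ hs => le_trans hs huv

theorem intervalIntegrable_upperInverse (hf : Tendsto f atTop atTop) {a b : ℝ}
    (ha : f 0 ≤ a) (hb : f 0 ≤ b) : IntervalIntegrable (upperInverse f) volume a b :=
  ((monotoneOn_upperInverse hf).mono fun _ hx => le_trans (le_min ha hb) hx.1).intervalIntegrable

theorem integral_upperInverse_sub_nonneg (hmono : Monotone f) (hf : Tendsto f atTop atTop)
    {t θ : ℝ} (hθ : f 0 ≤ θ) :
    0 ≤ ∫ u in f t..θ, (upperInverse f u - t) := by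
  rcases le_total (f t) θ with htθ | hθt
  · exact integral_nonneg htθ fun u hu => sub_nonneg.mpr (le_upperInverse hf hu.1)
  · rw [integral_symm, ← intervalIntegral.integral_neg]
    refine integral_nonneg_of_ae_restrict hθt ?_
    rw [← Measure.restrict_congr_set Ioo_ae_eq_Icc]
    refine ae_restrict_of_forall_mem measurableSet_Ioo fun u hu => ?_
    simpa using upperInverse_le hmono (hθ.trans hu.1.le) hu.2

theorem integral_upperInverse_sub_id (hf : Tendsto f atTop atTop) (h0 : f 0 ≤ 0) {c : ℝ}
    (hc : f 0 ≤ c) :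
    ∫ u in (0 : ℝ)..c, (upperInverse f u - u)
      = (∫ u in (0 : ℝ)..c, upperInverse f u) - c ^ 2 / 2 := by
  rw [integral_sub (intervalIntegrable_upperInverse hf h0 hc) intervalIntegrable_id, integral_id]
  ring

/-- The difference of the two sides is `∫ u in f t..θ, (upperInverse f u - t) + q θ`. -/
theorem threshold_minimizes_penalized_sq (hmono : Monotone f) (hf : Tendsto f atTop atTop)
    (hbound : ∀ t, 0 ≤ t → 0 ≤ f t ∧ f t ≤ t) {P q : ℝ → ℝ} (hq : ∀ θ, 0 ≤ q θ)
    (hqf : ∀ t, q (f t) = 0)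
    (hP : ∀ θ, P θ - P 0 = (∫ u in (0:ℝ)..|θ|, (upperInverse f u - u)) + q θ)
    {t θ : ℝ} (ht : 0 ≤ t) (hθ : 0 ≤ θ) :
    (t - f t) ^ 2 / 2 + P (f t) ≤ (t - θ) ^ 2 / 2 + P θ := by
  have h0 : f 0 ≤ 0 := (hbound 0 le_rfl).2
  have hT : 0 ≤ f t := (hbound t ht).1
  have hPT := hP (f t)
  have hPθ := hP θ
  rw [abs_of_nonneg hT, hqf, integral_upperInverse_sub_id hf h0 (h0.trans hT)] at hPT
  rw [abs_of_nonneg hθ, integral_upperInverse_sub_id hf h0 (h0.trans hθ)] at hPθ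
  have hsplit : ∫ u in f t..θ, (upperInverse f u - t)
      = (∫ u in (0 : ℝ)..θ, upperInverse f u) - (∫ u in (0 : ℝ)..f t, upperInverse f u)
        - (θ - f t) * t := by
    rw [integral_sub (intervalIntegrable_upperInverse hf (h0.trans hT) (h0.trans hθ))
      intervalIntegrable_const, ← integral_interval_sub_left
      (intervalIntegrable_upperInverse hf h0 (h0.trans hθ))
      (intervalIntegrable_upperInverse hf h0 (h0.trans hT)), intervalIntegral.integral_const,
      smul_eq_mul]
  linear_combination hPT - hPθ + hsplit + hq θ
    + integral_upperInverse_sub_nonneg hmono hf (h0.trans hθ)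

end UpperInverse

open Finset

structure IsDoublySubstochastic {k : ℕ} (D : Matrix (Fin k) (Fin k) ℝ) : Prop where
  nonneg : ∀ i j, 0 ≤ D i j
  sum_row_le_one : ∀ i, ∑ j, D i j ≤ 1
  sum_col_le_one : ∀ j, ∑ i, D i j ≤ 1

namespace IsDoublySubstochastic

variable {k : ℕ}

theorem submatrix_castSucc {D : Matrix (Fin (k + 1)) (Fin (k + 1)) ℝ}
    (hD : IsDoublySubstochastic D) :
    IsDoublySubstochastic (D.submatrix Fin.castSucc Fin.castSucc) where
  nonneg i j := hD.nonneg _ _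
  sum_row_le_one i := by
    have := hD.sum_row_le_one i.castSucc
    rw [Fin.sum_univ_castSucc] at this
    simp only [submatrix_apply]
    linarith [hD.nonneg i.castSucc (Fin.last k)]
  sum_col_le_one j := by
    have := hD.sum_col_le_one j.castSucc
    rw [Fin.sum_univ_castSucc] at this
    simp only [submatrix_apply]
    linarith [hD.nonneg (Fin.last k) j.castSucc]

/-- Induction on `k`: with `α, β` the last entries,
`a i * b j = (a i - α) * (b j - β) + α * b j + (a i - α) * β`; the first term vanishes on the last
row and column, and the other two are controlled by the column and row sums. -/
theorem sum_sum_mul_mul_le {D : Matrix (Fin k) (Fin k) ℝ} (hD : IsDoublySubstochastic D)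
    {a b : Fin k → ℝ} (ha : Antitone a) (hb : Antitone b) (ha0 : ∀ i, 0 ≤ a i)
    (hb0 : ∀ i, 0 ≤ b i) :
    ∑ i, ∑ j, a i * b j * D i j ≤ ∑ i, a i * b i := by
  induction k with
  | zero => simp
  | succ k ih =>
    set α := a (Fin.last k)
    set β := b (Fin.last k)
    have ha' : ∀ i, 0 ≤ a i - α := fun i => sub_nonneg.mpr (ha (Fin.le_last i))
    have hb' : ∀ i, 0 ≤ b i - β := fun i => sub_nonneg.mpr (hb (Fin.le_last i))
    have hrest := ih hD.submatrix_castSucc (a := fun i => a i.castSucc - α)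
      (b := fun i => b i.castSucc - β) (fun i j hij => by simpa using ha hij)
      (fun i j hij => by simpa using hb hij) (fun _ => ha' _) (fun _ => hb' _)
    have hcol : ∑ i, ∑ j, b j * D i j ≤ ∑ j, b j := by
      rw [sum_comm]
      exact sum_le_sum fun j _ => by
        rw [← mul_sum]; exact mul_le_of_le_one_right (hb0 j) (hD.sum_col_le_one j)
    have hrow : ∑ i, ∑ j, (a i - α) * D i j ≤ ∑ i, (a i - α) :=
      sum_le_sum fun i _ => by
        rw [← mul_sum]; exact mul_le_of_le_one_right (ha' i) (hD.sum_row_le_one i)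
    simp only [submatrix_apply] at hrest
    have hsplit : ∑ i, ∑ j, a i * b j * D i j
        = ∑ i : Fin k, ∑ j : Fin k,
            (a i.castSucc - α) * (b j.castSucc - β) * D i.castSucc j.castSucc
          + α * ∑ i, ∑ j, b j * D i j + β * ∑ i, ∑ j, (a i - α) * D i j := by
      have hlast : ∑ i : Fin k, ∑ j : Fin k,
            (a i.castSucc - α) * (b j.castSucc - β) * D i.castSucc j.castSucc
          = ∑ i, ∑ j, (a i - α) * (b j - β) * D i j := by
        simp [Fin.sum_univ_castSucc, α, β]
      rw [hlast, mul_sum, mul_sum, ← sum_add_distrib, ← sum_add_distrib]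
      refine sum_congr rfl fun i _ => ?_
      rw [mul_sum, mul_sum, ← sum_add_distrib, ← sum_add_distrib]
      exact sum_congr rfl fun j _ => by ring
    have hdiag : ∑ i, a i * b i = ∑ i : Fin k, (a i.castSucc - α) * (b i.castSucc - β)
          + α * ∑ j, b j + β * ∑ i, (a i - α) := by
      have hlast : ∑ i : Fin k, (a i.castSucc - α) * (b i.castSucc - β)
          = ∑ i, (a i - α) * (b i - β) := by
        simp [Fin.sum_univ_castSucc, α, β]
      rw [hlast, mul_sum, mul_sum, ← sum_add_distrib, ← sum_add_distrib]
      exact sum_congr rfl fun i _ => by ring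
    rw [hsplit, hdiag]
    gcongr
    · exact ha0 _
    · exact hb0 _

end IsDoublySubstochastic

section Frobenius

variable {n m k : ℕ}

theorem frobSq_eq_trace (A : Matrix (Fin n) (Fin m) ℝ) : frobSq A = trace (Aᵀ * A) := by
  simp only [frobSq, trace, Matrix.diag, mul_apply, transpose_apply, sq]
  exact sum_comm

theorem frobSq_mul_diagonal_mul_transpose {U : Matrix (Fin n) (Fin k) ℝ}
    {V : Matrix (Fin m) (Fin k) ℝ} (hU : Uᵀ * U = 1) (hV : Vᵀ * V = 1) (d : Fin k → ℝ) :
    frobSq (U * diagonal d * Vᵀ) = ∑ i, d i ^ 2 := by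
  have hsq : (U * diagonal d * Vᵀ)ᵀ * (U * diagonal d * Vᵀ)
      = V * diagonal (fun i => d i ^ 2) * Vᵀ := by
    simp only [transpose_mul, transpose_transpose, diagonal_transpose, Matrix.mul_assoc]
    rw [← Matrix.mul_assoc Uᵀ, hU, Matrix.one_mul, ← Matrix.mul_assoc (diagonal d),
      diagonal_mul_diagonal]
    simp only [sq]
  rw [frobSq_eq_trace, hsq, trace_mul_comm, ← Matrix.mul_assoc, hV, Matrix.one_mul,
    trace_diagonal]

theorem frobSq_sub (Y B : Matrix (Fin n) (Fin m) ℝ) :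
    frobSq (Y - B) = frobSq Y - 2 * trace (Yᵀ * B) + frobSq B := by
  have htrace : trace (Yᵀ * B) = ∑ i, ∑ j, Y i j * B i j := by
    simp only [trace, Matrix.diag, mul_apply, transpose_apply]
    exact sum_comm
  simp only [htrace, frobSq, Matrix.sub_apply, mul_sum, ← sum_sub_distrib,
    ← sum_add_distrib]
  exact sum_congr rfl fun i _ => sum_congr rfl fun j _ => by ring

end Frobenius

section Bessel

variable {n k : ℕ} {U W : Matrix (Fin n) (Fin k) ℝ}

/-- `1 - (Uᵀ W)(Uᵀ W)ᵀ = Eᵀ E` for `E = U - W Wᵀ U`, whose Gram matrix has nonnegative diagonal. -/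
theorem sum_sq_transpose_mul_apply_row_le_one (hU : Uᵀ * U = 1) (hW : Wᵀ * W = 1)
    (i : Fin k) : ∑ j, (Uᵀ * W) i j ^ 2 ≤ 1 := by
  set E := U - W * (Wᵀ * U)
  have hWW : ∀ X : Matrix (Fin k) (Fin k) ℝ, Wᵀ * (W * X) = X := fun X => by
    rw [← Matrix.mul_assoc, hW, Matrix.one_mul]
  have hE : Eᵀ * E = 1 - (Uᵀ * W) * (Uᵀ * W)ᵀ := by
    simp only [E, transpose_sub, transpose_mul, transpose_transpose, Matrix.sub_mul,
      Matrix.mul_sub, Matrix.mul_assoc, hWW, hU]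
    abel
  have hdiag : 0 ≤ (Eᵀ * E) i i := by
    rw [mul_apply]; exact sum_nonneg fun l _ => mul_self_nonneg (E l i)
  rw [hE, Matrix.sub_apply, one_apply_eq, mul_apply] at hdiag
  simpa [sq] using hdiag

theorem sum_sq_transpose_mul_apply_col_le_one (hU : Uᵀ * U = 1) (hW : Wᵀ * W = 1)
    (j : Fin k) : ∑ i, (Uᵀ * W) i j ^ 2 ≤ 1 := by
  convert sum_sq_transpose_mul_apply_row_le_one hW hU j using 3 with i
  rw [← transpose_apply (Uᵀ * W), transpose_mul, transpose_transpose]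

theorem isDoublySubstochastic_sq_transpose_mul (hU : Uᵀ * U = 1) (hW : Wᵀ * W = 1) :
    IsDoublySubstochastic (Matrix.of fun i j => (Uᵀ * W) i j ^ 2) :=
  ⟨fun _ _ => sq_nonneg _, sum_sq_transpose_mul_apply_row_le_one hU hW,
    sum_sq_transpose_mul_apply_col_le_one hU hW⟩

end Bessel

section VonNeumann

variable {n m k : ℕ}

theorem trace_transpose_mul_eq_sum (U W : Matrix (Fin n) (Fin k) ℝ)
    (V X : Matrix (Fin m) (Fin k) ℝ) (σ τ : Fin k → ℝ) :
    trace ((U * diagonal σ * Vᵀ)ᵀ * (W * diagonal τ * Xᵀ))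
      = ∑ i, ∑ j, σ i * τ j * ((Uᵀ * W) i j * (Vᵀ * X) i j) := by
  have hcycle : trace ((U * diagonal σ * Vᵀ)ᵀ * (W * diagonal τ * Xᵀ))
      = trace (diagonal σ * (Uᵀ * W) * diagonal τ * (Vᵀ * X)ᵀ) := by
    simp only [transpose_mul, transpose_transpose, diagonal_transpose, Matrix.mul_assoc]
    rw [trace_mul_comm V]
    simp only [Matrix.mul_assoc]
  rw [hcycle]
  refine sum_congr rfl fun i _ => ?_
  rw [Matrix.diag_apply, mul_apply]
  refine sum_congr rfl fun j _ => ?_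
  rw [mul_diagonal, diagonal_mul, transpose_apply]
  ring

theorem trace_transpose_mul_le_of_isSVD {Y B : Matrix (Fin n) (Fin m) ℝ}
    {U W : Matrix (Fin n) (Fin k) ℝ} {V X : Matrix (Fin m) (Fin k) ℝ} {σ τ : Fin k → ℝ}
    (hY : IsSVD Y U σ V) (hB : IsSVD B W τ X) :
    trace (Yᵀ * B) ≤ ∑ i, σ i * τ i := by
  obtain ⟨hU, hV, hσ, hσ0, rfl⟩ := hY
  obtain ⟨hW, hX, hτ, hτ0, rfl⟩ := hB
  set M := Uᵀ * W
  set N := Vᵀ * X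
  have hM := (isDoublySubstochastic_sq_transpose_mul hU hW).sum_sum_mul_mul_le hσ hτ hσ0 hτ0
  have hN := (isDoublySubstochastic_sq_transpose_mul hV hX).sum_sum_mul_mul_le hσ hτ hσ0 hτ0
  simp only [of_apply] at hM hN
  rw [trace_transpose_mul_eq_sum]
  calc ∑ i, ∑ j, σ i * τ j * (M i j * N i j)
      ≤ ∑ i, ∑ j, (σ i * τ j * M i j ^ 2 + σ i * τ j * N i j ^ 2) / 2 := by
        gcongr with i _ j _
        nlinarith [mul_nonneg (mul_nonneg (hσ0 i) (hτ0 j)) (sq_nonneg (M i j - N i j))]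
    _ = ((∑ i, ∑ j, σ i * τ j * M i j ^ 2) + ∑ i, ∑ j, σ i * τ j * N i j ^ 2) / 2 := by
        simp only [← sum_div, sum_add_distrib]
    _ ≤ ∑ i, σ i * τ i := by linarith

end VonNeumann

section SingularValues

variable {n m k : ℕ} {Y : Matrix (Fin n) (Fin m) ℝ} {U : Matrix (Fin n) (Fin k) ℝ}
  {V : Matrix (Fin m) (Fin k) ℝ} {σ : Fin k → ℝ}

theorem IsSVD.frobSq_eq (hY : IsSVD Y U σ V) : frobSq Y = ∑ i, σ i ^ 2 := by
  obtain ⟨hU, hV, -, -, rfl⟩ := hY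
  exact frobSq_mul_diagonal_mul_transpose hU hV σ

theorem IsSVD.frobSq_sub_mul_diagonal_mul_transpose (hY : IsSVD Y U σ V) (d : Fin k → ℝ) :
    frobSq (Y - U * diagonal d * Vᵀ) = ∑ i, (σ i - d i) ^ 2 := by
  obtain ⟨hU, hV, -, -, rfl⟩ := hY
  rw [← Matrix.sub_mul, ← Matrix.mul_sub, diagonal_sub,
    frobSq_mul_diagonal_mul_transpose hU hV]

theorem IsSVD.sum_sq_sub_le_frobSq_sub {B : Matrix (Fin n) (Fin m) ℝ}
    {W : Matrix (Fin n) (Fin k) ℝ} {X : Matrix (Fin m) (Fin k) ℝ} {τ : Fin k → ℝ}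
    (hY : IsSVD Y U σ V) (hB : IsSVD B W τ X) :
    ∑ i, (σ i - τ i) ^ 2 ≤ frobSq (Y - B) := by
  have hvn := trace_transpose_mul_le_of_isSVD hY hB
  rw [frobSq_sub, hY.frobSq_eq, hB.frobSq_eq]
  have hexpand :
      ∑ i, (σ i - τ i) ^ 2 = ∑ i, σ i ^ 2 - 2 * ∑ i, σ i * τ i + ∑ i, τ i ^ 2 := by
    simp only [mul_sum, ← sum_sub_distrib, ← sum_add_distrib]
    exact sum_congr rfl fun i _ => by ring
  linarith

end SingularValues

theorem matrix_thresholding_minimizer_general {n m : ℕ}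
    (Θ : ℝ → ℝ → ℝ) (hΘ : IsThresholdFunction Θ) (lam : ℝ) (hlam : 0 ≤ lam)
    (P q : ℝ → ℝ)
    (hq : ∀ θ : ℝ, 0 ≤ q θ) (hqΘ : ∀ t : ℝ, q (Θ t lam) = 0)
    (hP : ∀ θ : ℝ,
      P θ - P 0 = (∫ u in (0:ℝ)..|θ|, (sSup {s : ℝ | Θ s lam ≤ u} - u)) + q θ)
    (Y : Matrix (Fin n) (Fin m) ℝ)
    (U : Matrix (Fin n) (Fin (min n m)) ℝ) (σ : Fin (min n m) → ℝ)
    (V : Matrix (Fin m) (Fin (min n m)) ℝ)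
    (hY : IsSVD Y U σ V) :
    ∀ (B : Matrix (Fin n) (Fin m) ℝ)
      (UB : Matrix (Fin n) (Fin (min n m)) ℝ) (σB : Fin (min n m) → ℝ)
      (VB : Matrix (Fin m) (Fin (min n m)) ℝ), IsSVD B UB σB VB →
      frobSq (Y - U * diagonal (fun i => Θ (σ i) lam) * Vᵀ) / 2 + ∑ i, P (Θ (σ i) lam)
        ≤ frobSq (Y - B) / 2 + ∑ i, P (σB i) := by
  obtain ⟨-, hmono, htop, hbound⟩ := hΘ lam hlam
  intro B UB σB VB hB
  have hscalar (i : Fin (min n m)) :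
      (σ i - Θ (σ i) lam) ^ 2 / 2 + P (Θ (σ i) lam) ≤ (σ i - σB i) ^ 2 / 2 + P (σB i) :=
    threshold_minimizes_penalized_sq hmono htop hbound hq hqΘ hP (hY.2.2.2.1 i) (hB.2.2.2.1 i)
  calc frobSq (Y - U * diagonal (fun i => Θ (σ i) lam) * Vᵀ) / 2 + ∑ i, P (Θ (σ i) lam)
      = ∑ i, ((σ i - Θ (σ i) lam) ^ 2 / 2 + P (Θ (σ i) lam)) := by
        rw [hY.frobSq_sub_mul_diagonal_mul_transpose, sum_add_distrib, sum_div]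
    _ ≤ ∑ i, ((σ i - σB i) ^ 2 / 2 + P (σB i)) := sum_le_sum fun i _ => hscalar i
    _ = (∑ i, (σ i - σB i) ^ 2) / 2 + ∑ i, P (σB i) := by
        rw [sum_add_distrib, sum_div]
    _ ≤ frobSq (Y - B) / 2 + ∑ i, P (σB i) := by
        gcongr
        exact hY.sum_sq_sub_le_frobSq_sub hB

/-- Let `Θ` be a threshold function, `λ ≥ 0`, `P` a penalty satisfying condition (constrP)
for `Θ`, and `Y = U diag(σ) Vᵀ` an SVD of `Y ∈ ℝ^{n×m}` with `Θ(·;λ)` continuous at each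
singular value `σ_i` of `Y`. Then the matrix thresholding `B̂ = Θ^σ(Y;λ) = U diag(Θ(σ_i;λ)) Vᵀ`
is a global minimizer of `F(B) = ‖Y−B‖_F²/2 + ∑_i P(σ_i(B);λ)`. (The singular values of `B̂`
are `Θ(σ_i;λ)`, and the minimization is stated over all `B` together with any SVD of `B`.) -/
theorem matrix_thresholding_minimizer {n m : ℕ}
    (Θ : ℝ → ℝ → ℝ) (hΘ : IsThresholdFunction Θ) (lam : ℝ) (hlam : 0 ≤ lam)
    (P q : ℝ → ℝ)
    (hq : ∀ θ : ℝ, 0 ≤ q θ) (hqΘ : ∀ t : ℝ, q (Θ t lam) = 0)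
    (hP : ∀ θ : ℝ,
      P θ - P 0 = (∫ u in (0:ℝ)..|θ|, (sSup {s : ℝ | Θ s lam ≤ u} - u)) + q θ)
    (Y : Matrix (Fin n) (Fin m) ℝ)
    (U : Matrix (Fin n) (Fin (min n m)) ℝ) (σ : Fin (min n m) → ℝ)
    (V : Matrix (Fin m) (Fin (min n m)) ℝ)
    (hY : IsSVD Y U σ V)
    (hcont : ∀ i, ContinuousAt (fun s => Θ s lam) (σ i)) :
    ∀ (B : Matrix (Fin n) (Fin m) ℝ)
      (UB : Matrix (Fin n) (Fin (min n m)) ℝ) (σB : Fin (min n m) → ℝ)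
      (VB : Matrix (Fin m) (Fin (min n m)) ℝ), IsSVD B UB σB VB →
      frobSq (Y - U * diagonal (fun i => Θ (σ i) lam) * Vᵀ) / 2 + ∑ i, P (Θ (σ i) lam)
        ≤ frobSq (Y - B) / 2 + ∑ i, P (σB i) :=
  matrix_thresholding_minimizer_general Θ hΘ lam hlam P q hq hqΘ hP Y U σ V hY
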